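/- Let f : S¹ → ℂ be a smooth function on the unit circle whose support is a compact subset of S¹∖{1}, let F : ℂ → ℂ be a smooth function with F|ℝ = f∘ψ, supported in {x + iy : x ∈ supp(f∘ψ), |y| ≤ C} for some 0 < C < 1, and satisfying: for every l ∈ ℕ there is C_l ≥ 0 with |∂̄F(z)| ≤ C_l |Im z|^l for all z. Let G = F ∘ ψ^{-1} (extended by 0 at ξ = 1). Then for every l ∈ ℕ there exists D_l ≥ 0 such that |∂̄G(ξ)| ≤ D_l · d(ξ, S¹)^l for all ξ ∈ ℂ. -/

import Mathlib

open Complex MeasureTheory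

/-- The Wirtinger derivative `∂̄F = (∂ₓF + i ∂_y F)/2` of a function `F : ℂ → ℂ`,
viewing `ℂ ≅ ℝ²`. -/
noncomputable def dbar (F : ℂ → ℂ) (z : ℂ) : ℂ :=
  (fderiv ℝ F z 1 + Complex.I * fderiv ℝ F z Complex.I) / 2

lemma dbar_eventually_zero {G : ℂ → ℂ} {ξ : ℂ} (h : G =ᶠ[nhds ξ] fun _ => 0) :
    dbar G ξ = 0 := by
  unfold dbar
  rw [h.fderiv_eq]
  simp

lemma dbar_comp (F h : ℂ → ℂ) (ξ d : ℂ) (hFd : DifferentiableAt ℝ F (h ξ))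
    (hh : HasDerivAt h d ξ) :
    dbar (F ∘ h) ξ = (starRingEnd ℂ) d * dbar F (h ξ) := by
  have hfd : HasFDerivAt h (ContinuousLinearMap.smulRight (1 : ℂ →L[ℂ] ℂ) d) ξ :=
    hh.hasFDerivAt
  have hcomp : HasFDerivAt (F ∘ h)
      ((fderiv ℝ F (h ξ)).comp
        ((ContinuousLinearMap.smulRight (1 : ℂ →L[ℂ] ℂ) d).restrictScalars ℝ)) ξ :=
    (hFd.hasFDerivAt).comp ξ (hfd.restrictScalars ℝ)
  have hfe := hcomp.fderiv
  unfold dbar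
  rw [hfe]
  set L := fderiv ℝ F (h ξ) with hL
  simp only [ContinuousLinearMap.coe_comp', Function.comp_apply,
    ContinuousLinearMap.coe_restrictScalars', ContinuousLinearMap.smulRight_apply,
    ContinuousLinearMap.one_apply, smul_eq_mul, one_mul]
  obtain ⟨a, b, hab⟩ : ∃ a b : ℝ, d = a • (1:ℂ) + b • I :=
    ⟨d.re, d.im, by simp [Complex.real_smul]⟩
  subst hab
  have h2 : I * (a • (1:ℂ) + b • I) = (-b) • (1:ℂ) + a • I := by
    simp [Complex.real_smul, Complex.ext_iff]
  rw [h2, L.map_add, L.map_add, L.map_smul, L.map_smul, L.map_smul, L.map_smul]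
  have hc : (starRingEnd ℂ) (a • (1:ℂ) + b • I) = (a : ℂ) - b * I := by
    simp [Complex.real_smul, Complex.ext_iff]
  rw [hc]
  simp only [Complex.real_smul]
  linear_combination (norm := (push_cast; ring)) (b * L I / 2) * Complex.I_sq

lemma abs_sub_one_le_infDist (ξ : ℂ) :
    |‖ξ‖ - 1| ≤ Metric.infDist ξ (Metric.sphere (0:ℂ) 1) := by
  by_contra hlt
  push_neg at hlt
  obtain ⟨y, hy, hd⟩ := (Metric.infDist_lt_iff ⟨1, by simp⟩).1 hlt
  rw [mem_sphere_zero_iff_norm] at hy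
  have h1 : |‖ξ‖ - ‖y‖| ≤ ‖ξ - y‖ := abs_norm_sub_norm_le ξ y
  rw [dist_eq_norm] at hd
  rw [hy] at h1
  linarith

lemma im_cayley (z : ℂ) (hz : z ≠ 1) :
    (Complex.I * (z + 1) / (z - 1)).im
      = (Complex.normSq z - 1) / Complex.normSq (z - 1) := by
  have hz1 : z - 1 ≠ 0 := sub_ne_zero.2 hz
  rw [Complex.div_im]
  simp [Complex.normSq_apply]
  ring

/-- Let `f` be a smooth function on the unit circle `S¹` (encoded as a function
`ℂ → ℂ`, smooth in the angle parametrization `θ ↦ f(e^{iθ})`) whose support in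
`S¹` is a compact subset of `S¹∖{1}`. Let `F` be an almost analytic extension of
`f ∘ ψ`, where `ψ(z) = (z + i)/(z − i)` is the Cayley transform, and let
`G = F ∘ ψ⁻¹` (extended by `0` at `ξ = 1`). Then for every `l ∈ ℕ` there is a
constant `D_l ≥ 0` with `|∂̄G(ξ)| ≤ D_l · d(ξ, S¹)^l` for all `ξ ∈ ℂ`. -/
theorem stmt9 (f : ℂ → ℂ)
    (hf : ContDiff ℝ (⊤ : ℕ∞) (fun θ : ℝ => f (Complex.exp (θ * Complex.I))))
    (hfsupp : IsCompact (closure {ξ : ℂ | ξ ∈ Metric.sphere (0 : ℂ) 1 ∧ f ξ ≠ 0}) ∧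
      closure {ξ : ℂ | ξ ∈ Metric.sphere (0 : ℂ) 1 ∧ f ξ ≠ 0} ⊆
        Metric.sphere (0 : ℂ) 1 \ {1})
    (fψ : ℝ → ℂ) (hfψ : ∀ x : ℝ, fψ x = f ((x + Complex.I) / (x - Complex.I)))
    (C : ℝ) (hC0 : 0 < C) (hC1 : C < 1)
    (F : ℂ → ℂ) (hF : ContDiff ℝ (⊤ : ℕ∞) F)
    (hFf : ∀ x : ℝ, F x = fψ x)
    (hFsupp : Function.support F ⊆ {z : ℂ | z.re ∈ tsupport fψ ∧ |z.im| ≤ C})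
    (hFest : ∀ l : ℕ, ∃ Cl : ℝ, 0 ≤ Cl ∧
      ∀ z : ℂ, ‖dbar F z‖ ≤ Cl * |z.im| ^ l)
    (G : ℂ → ℂ)
    (hG : ∀ ξ : ℂ, G ξ =
      if ξ = 1 then 0 else F (Complex.I * (ξ + 1) / (ξ - 1))) :
    ∀ l : ℕ, ∃ Dl : ℝ, 0 ≤ Dl ∧
      ∀ ξ : ℂ, ‖dbar G ξ‖ ≤
        Dl * Metric.infDist ξ (Metric.sphere (0 : ℂ) 1) ^ l := by
  intro l
  obtain ⟨Cl, hCl0, hCl⟩ := hFest l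
  -- a bound on the support of fψ
  obtain ⟨A, hA0, hA⟩ : ∃ A : ℝ, 0 ≤ A ∧ ∀ x : ℝ, fψ x ≠ 0 → |x| ≤ A := by
    set Kc := closure {ξ : ℂ | ξ ∈ Metric.sphere (0:ℂ) 1 ∧ f ξ ≠ 0} with hKc
    have hψmem : ∀ x : ℝ, fψ x ≠ 0 → ((x:ℂ) + Complex.I) / ((x:ℂ) - Complex.I) ∈ Kc := by
      intro x hx
      apply subset_closure
      refine ⟨?_, ?_⟩
      · rw [mem_sphere_zero_iff_norm, norm_div]
        have hEq : ‖(x:ℂ) + Complex.I‖ = ‖(x:ℂ) - Complex.I‖ := by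
          rw [Complex.norm_def, Complex.norm_def]
          congr 1
          simp [Complex.normSq_apply]
        have hne0 : ‖(x:ℂ) - Complex.I‖ ≠ 0 := by
          simp only [norm_ne_zero_iff]
          intro hcon
          have := congrArg Complex.im hcon
          simp at this
        rw [hEq, div_self hne0]
      · rw [hfψ x] at hx; exact hx
    by_cases hne : Kc.Nonempty
    · have h1K : (1:ℂ) ∉ Kc := fun h1 => (hfsupp.2 h1).2 rfl
      have hδ : 0 < Metric.infDist (1:ℂ) Kc :=
        (isClosed_closure.notMem_iff_infDist_pos hne).1 h1K
      set δ := Metric.infDist (1:ℂ) Kc with hδdef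
      refine ⟨2 / δ, by positivity, fun x hx => ?_⟩
      have hmem := hψmem x hx
      have hd : δ ≤ dist (1:ℂ) (((x:ℂ) + Complex.I) / ((x:ℂ) - Complex.I)) :=
        Metric.infDist_le_dist_of_mem hmem
      have hxI : ((x:ℂ) - Complex.I) ≠ 0 := by
        intro hcon
        have := congrArg Complex.im hcon
        simp at this
      have hdist : dist (1:ℂ) (((x:ℂ) + Complex.I) / ((x:ℂ) - Complex.I))
          = 2 / ‖(x:ℂ) - Complex.I‖ := by
        rw [Complex.dist_eq]
        have heq2 : (1:ℂ) - ((x:ℂ) + Complex.I) / ((x:ℂ) - Complex.I)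
            = (-2 * Complex.I) / ((x:ℂ) - Complex.I) := by
          field_simp
          ring
        rw [heq2, norm_div]
        congr 1
        simp
      rw [hdist] at hd
      have habsI : 0 < ‖(x:ℂ) - Complex.I‖ := norm_pos_iff.mpr hxI
      have h2 : ‖(x:ℂ) - Complex.I‖ ≤ 2 / δ := by
        rw [le_div_iff₀ hδ]
        have := (le_div_iff₀ habsI).1 hd
        linarith [this]
      have h3 : |x| ≤ ‖(x:ℂ) - Complex.I‖ := by
        have := Complex.abs_re_le_norm ((x:ℂ) - Complex.I)
        simpa using this
      linarith
    · refine ⟨0, le_refl 0, fun x hx => ?_⟩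
      exact absurd ⟨_, hψmem x hx⟩ hne
  set r : ℝ := 1 / (A + 2) with hrdef
  have hr : 0 < r := by positivity
  have hr1 : r ≤ 1 / 2 := by
    rw [hrdef]
    apply one_div_le_one_div_of_le <;> linarith
  set R : ℝ := (1 + C) / (1 - C) + 1 with hRdef
  have hR1 : 1 < R := by
    rw [hRdef]
    have : 0 < (1 + C) / (1 - C) := div_pos (by linarith) (by linarith)
    linarith
  -- F vanishes outside a ball of radius A + 1
  have hFabs : ∀ z : ℂ, F z ≠ 0 → ‖z‖ ≤ A + 1 := by
    intro z hz
    obtain ⟨h1, h2⟩ := hFsupp hz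
    have hts : tsupport fψ ⊆ Set.Icc (-A) A :=
      closure_minimal (fun x hx => abs_le.1 (hA x hx)) isClosed_Icc
    have hre : |z.re| ≤ A := abs_le.2 (hts h1)
    calc ‖z‖ ≤ |z.re| + |z.im| := Complex.norm_le_abs_re_add_abs_im z
      _ ≤ A + C := add_le_add hre h2
      _ ≤ A + 1 := by linarith
  -- G vanishes near 1
  have hG1 : ∀ z : ℂ, dist z 1 < r → G z = 0 := by
    intro z hz
    rcases eq_or_ne z 1 with rfl | hz1
    · rw [hG]; simp
    · rw [hG, if_neg hz1]
      by_contra hFz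
      have hb := hFabs _ hFz
      have hz1' : z - (1:ℂ) ≠ 0 := sub_ne_zero.2 hz1
      set s : ℝ := ‖z - 1‖ with hs
      have hs0 : 0 < s := by
        rw [hs]; exact (norm_pos_iff.mpr hz1')
      have hsr : s < r := by rw [hs, ← Complex.dist_eq]; exact hz
      set t : ℝ := ‖z + 1‖ with ht
      have habs : ‖Complex.I * (z + 1) / (z - 1)‖ = t / s := by
        rw [norm_div, norm_mul]
        simp [← ht, ← hs]
      have h2t : 2 - s ≤ t := by
        have h2 : ‖(z + 1) - (z - 1)‖ ≤ ‖z + 1‖ + ‖z - 1‖ := by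
          exact norm_sub_le (z + 1) (z - 1)
        have h3 : (z + 1) - (z - 1) = 2 := by ring
        rw [h3] at h2
        have h4 : ‖(2:ℂ)‖ = 2 := by simp
        rw [h4] at h2
        linarith [h2]
      rw [habs] at hb
      have hts : t ≤ (A + 1) * s := (div_le_iff₀ hs0).1 hb
      have hAs : (A + 2) * s < 1 := by
        have h' : s < 1 / (A + 2) := by rw [← hrdef]; exact hsr
        calc (A + 2) * s < (A + 2) * (1 / (A + 2)) :=
              mul_lt_mul_of_pos_left h' (by linarith)
          _ = 1 := by field_simp
      nlinarith
  -- G vanishes far away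
  have hGfar : ∀ z : ℂ, R < ‖z‖ → G z = 0 := by
    intro z hz
    have hz1 : z ≠ 1 := by
      intro h; subst h; simp at hz; linarith
    rw [hG, if_neg hz1]
    by_contra hFz
    have him := (hFsupp hFz).2
    have hz1' : z - (1:ℂ) ≠ 0 := sub_ne_zero.2 hz1
    set t : ℝ := ‖z‖ with ht
    have ht1 : 1 < t := lt_trans hR1 hz
    have h1 : Complex.normSq (z - 1) ≤ (t + 1) ^ 2 := by
      have h2 : ‖z - 1‖ ≤ t + 1 := by
        have := norm_sub_le z 1
        simpa only [norm_one, ← ht] using this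
      calc Complex.normSq (z - 1) = ‖z - 1‖ ^ 2 := (Complex.sq_norm _).symm
        _ ≤ (t + 1) ^ 2 := by nlinarith [norm_nonneg (z - 1)]
    have hpos : 0 < Complex.normSq (z - 1) := Complex.normSq_pos.2 hz1'
    have h2 : (t - 1) / (t + 1) ≤ (Complex.normSq z - 1) / Complex.normSq (z - 1) := by
      have heq : (t - 1) / (t + 1) = (t ^ 2 - 1) / (t + 1) ^ 2 := by
        rw [div_eq_div_iff (by linarith) (by positivity)]
        ring
      rw [heq, Complex.normSq_eq_norm_sq, ← ht]
      apply div_le_div_of_nonneg_left (by nlinarith) hpos h1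
    have h3 : C < (t - 1) / (t + 1) := by
      rw [lt_div_iff₀ (by linarith : (0:ℝ) < t + 1)]
      have hz' : (1 + C) / (1 - C) + 1 < t := by rw [← hRdef]; exact hz
      have : (1 + C) / (1 - C) < t - 1 := by linarith
      have := (div_lt_iff₀ (by linarith : (0:ℝ) < 1 - C)).1 this
      nlinarith
    rw [im_cayley z hz1] at him
    have := le_abs_self ((Complex.normSq z - 1) / Complex.normSq (z - 1))
    linarith
  -- conclusion
  refine ⟨Cl * (2 / r ^ 2) * ((R + 1) / r ^ 2) ^ l, ?_, fun ξ => ?_⟩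
  · apply mul_nonneg (mul_nonneg hCl0 (by positivity))
    exact pow_nonneg (div_nonneg (by linarith) (sq_nonneg r)) l
  by_cases hU : dist ξ 1 < r ∨ R < ‖ξ‖
  · -- G vanishes in a neighborhood of ξ
    have hzero : dbar G ξ = 0 := by
      apply dbar_eventually_zero
      rcases hU with hU | hU
      · filter_upwards [Metric.ball_mem_nhds ξ (by linarith : (0:ℝ) < r - dist ξ 1)] with z hz
        apply hG1
        calc dist z 1 ≤ dist z ξ + dist ξ 1 := dist_triangle z ξ 1
          _ < (r - dist ξ 1) + dist ξ 1 := by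
              linarith [Metric.mem_ball.1 hz]
          _ = r := by ring
      · have hopen : IsOpen {z : ℂ | R < ‖z‖} := by
          have : {z : ℂ | R < ‖z‖} = {z : ℂ | R < ‖z‖} := by
            rfl
          rw [this]
          exact isOpen_lt continuous_const continuous_norm
        filter_upwards [hopen.mem_nhds hU] with z hz
        exact hGfar z hz
    rw [hzero]
    simp only [norm_zero]
    apply mul_nonneg
    · apply mul_nonneg (mul_nonneg hCl0 (by positivity))
      exact pow_nonneg (div_nonneg (by linarith) (sq_nonneg r)) l
    · exact pow_nonneg Metric.infDist_nonneg l
  · push_neg at hU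
    obtain ⟨hU1, hU2⟩ := hU
    have hne : ξ ≠ 1 := by
      intro h; subst h; simp at hU1; linarith
    have hξ1 : ξ - (1:ℂ) ≠ 0 := sub_ne_zero.2 hne
    set h : ℂ → ℂ := fun z => Complex.I * (z + 1) / (z - 1) with hhdef
    have hev : G =ᶠ[nhds ξ] F ∘ h := by
      filter_upwards [isOpen_compl_singleton.mem_nhds
        (Set.mem_compl_singleton_iff.mpr hne)] with z hz
      rw [hG z, if_neg (Set.mem_compl_singleton_iff.mp hz)]
      rfl
    have hdG : dbar G ξ = dbar (F ∘ h) ξ := by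
      unfold dbar
      rw [hev.fderiv_eq]
    have hder : HasDerivAt h (-2 * Complex.I / (ξ - 1) ^ 2) ξ := by
      have h1 : HasDerivAt (fun z : ℂ => Complex.I * (z + 1)) Complex.I ξ := by
        simpa using ((hasDerivAt_id ξ).add_const 1).const_mul Complex.I
      have h2 : HasDerivAt (fun z : ℂ => z - 1) 1 ξ := (hasDerivAt_id ξ).sub_const 1
      have := h1.div h2 hξ1
      exact this.congr_deriv (by ring)
    have hFdiff : DifferentiableAt ℝ F (h ξ) :=
      (hF.differentiable (by simp)).differentiableAt
    rw [hdG, dbar_comp F h ξ _ hFdiff hder, norm_mul, Complex.norm_conj]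
    -- bound |deriv|
    have hrs : r ≤ ‖ξ - 1‖ := by
      rw [← Complex.dist_eq]; exact hU1
    have habsd : ‖-2 * Complex.I / (ξ - 1) ^ 2‖ ≤ 2 / r ^ 2 := by
      rw [norm_div, norm_pow, norm_mul]
      simp only [norm_neg, Complex.norm_two, Complex.norm_I, mul_one]
      apply div_le_div_of_nonneg_left (by norm_num) (by positivity)
      exact pow_le_pow_left₀ (le_of_lt hr) hrs 2
    -- bound |Im (h ξ)|
    set D : ℝ := Metric.infDist ξ (Metric.sphere (0:ℂ) 1) with hD
    have hD0 : 0 ≤ D := Metric.infDist_nonneg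
    have him : |(h ξ).im| ≤ (R + 1) / r ^ 2 * D := by
      have h1 : (h ξ).im = (Complex.normSq ξ - 1) / Complex.normSq (ξ - 1) :=
        im_cayley ξ hne
      rw [h1, abs_div, _root_.abs_of_nonneg (Complex.normSq_nonneg _)]
      set t : ℝ := ‖ξ‖ with htd
      have ht0 : 0 ≤ t := norm_nonneg ξ
      have hnum : |Complex.normSq ξ - 1| = |t - 1| * (t + 1) := by
        rw [Complex.normSq_eq_norm_sq, ← htd]
        calc |t ^ 2 - 1| = |(t - 1) * (t + 1)| := by ring_nf
          _ = |t - 1| * |t + 1| := abs_mul _ _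
          _ = |t - 1| * (t + 1) := by
              rw [_root_.abs_of_nonneg (by linarith : (0:ℝ) ≤ t + 1)]
      have hden : r ^ 2 ≤ Complex.normSq (ξ - 1) := by
        rw [Complex.normSq_eq_norm_sq]
        exact pow_le_pow_left₀ (le_of_lt hr) hrs 2
      have hDle : |t - 1| ≤ D := abs_sub_one_le_infDist ξ
      calc |Complex.normSq ξ - 1| / Complex.normSq (ξ - 1)
          ≤ |Complex.normSq ξ - 1| / r ^ 2 := by
            apply div_le_div_of_nonneg_left (abs_nonneg _) (by positivity) hden
        _ = |t - 1| * (t + 1) / r ^ 2 := by rw [hnum]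
        _ ≤ D * (R + 1) / r ^ 2 := by
            apply div_le_div_of_nonneg_right ?_ (by positivity)
            exact mul_le_mul hDle (by linarith) (by linarith) hD0
        _ = (R + 1) / r ^ 2 * D := by ring
    calc ‖-2 * Complex.I / (ξ - 1) ^ 2‖ * ‖dbar F (h ξ)‖
        ≤ (2 / r ^ 2) * (Cl * |(h ξ).im| ^ l) := by
          apply mul_le_mul habsd (hCl _) (norm_nonneg _) (by positivity)
      _ ≤ (2 / r ^ 2) * (Cl * ((R + 1) / r ^ 2 * D) ^ l) := by
          gcongr

      _ = Cl * (2 / r ^ 2) * ((R + 1) / r ^ 2) ^ l * D ^ l := by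
          rw [mul_pow]; ring
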